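/- (Bradley's q-analog of Hoffman's identity) Let 0 < q < 1, N a positive integer, k = (k_1,...,k_r) an index with Hoffman dual k^∨ = (l_1,...,l_s). Then ∑_{1 ≤ m_1 ≤ ... ≤ m_r ≤ N} q^{(k_1-1)m_1 + ... + (k_r-1)m_r} / ([m_1]_q^{k_1} ··· [m_r]_q^{k_r}) · (-1)^{m_r-1} q^{m_r(m_r+1)/2} C_q(N, m_r) = ∑_{1 ≤ n_1 ≤ ... ≤ n_s ≤ N} q^{n_1 + ... + n_s} / ([n_1]_q^{l_1} ··· [n_s]_q^{l_s}). -/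

import Mathlib

noncomputable def qint (q : ℝ) (m : ℕ) : ℝ := (1 - q ^ m) / (1 - q)

noncomputable def qfact (q : ℝ) (m : ℕ) : ℝ := ∏ a ∈ Finset.Icc 1 m, qint q a

noncomputable def qbinom (q : ℝ) (N m : ℕ) : ℝ := qfact q N / (qfact q m * qfact q (N - m))

/-- Weakly increasing tuples `1 ≤ m 0 ≤ ⋯ ≤ m (r-1) ≤ N`. -/
def wchains (r N : ℕ) : Finset (Fin r → ℕ) :=
  (Fintype.piFinset fun _ => Finset.Icc 1 N).filter fun m => ∀ i j : Fin r, i ≤ j → m i ≤ m j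

/-- The set of partial sums `k_1, k_1+k_2, …, k_1+⋯+k_{r-1}` of a list. -/
def psums (k : List ℕ) : Finset ℕ :=
  ((List.range (k.length - 1)).map (fun j => (k.take (j + 1)).sum)).toFinset

/-- `l` is the Hoffman dual of the index `k`. -/
def IsHoffmanDual (k l : List ℕ) : Prop :=
  k ≠ [] ∧ l ≠ [] ∧ (∀ x ∈ k, 0 < x) ∧ (∀ x ∈ l, 0 < x) ∧ k.sum = l.sum ∧
    psums l = Finset.Icc 1 (k.sum - 1) \ psums k

/-- The multiple harmonic q-sum `H_N^⋆(k;q)`. -/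
noncomputable def qHstar (q : ℝ) (N : ℕ) (k : List ℕ) : ℝ :=
  if h : 0 < k.length then
    ∑ m ∈ wchains k.length N,
      (∏ i : Fin k.length, q ^ ((k.get i - 1) * m i) / (qint q (m i)) ^ k.get i) *
        ((-1 : ℝ) ^ (m ⟨k.length - 1, by omega⟩ - 1) *
          q ^ (m ⟨k.length - 1, by omega⟩ * (m ⟨k.length - 1, by omega⟩ + 1) / 2) *
            qbinom q N (m ⟨k.length - 1, by omega⟩))
  else 1

/-- The multiple harmonic q-sum `z_N^⋆(l;q)`. -/
noncomputable def qzetaStar (q : ℝ) (N : ℕ) (l : List ℕ) : ℝ :=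
  ∑ m ∈ wchains l.length N, ∏ j : Fin l.length, q ^ (m j) / (qint q (m j)) ^ l.get j

/-!
Let `C(m, n) = connector q m n = (-1)^(m-1) q^(binom(m, 2) + n) [n-1 choose m-1]_q` for `m ≤ n`,
and `0` otherwise, and let `T g (m) = transfer q N g m = ∑_{n=1}^N C(m, n) g(n)`. The row sums of
`C` are the last factor `(-1)^(m-1) q^(m(m+1)/2) [N choose m]_q` of `qHstar`, and `T` intertwines
the two steps from which nested sums are built: `∑_{x=m}^N T g (x) / [x]_q = T (g / [·]_q) (m)`,
and `q^m / [m]_q · T g (m) = T (S g) (m)` with `S g (n) = ∑_{x=n}^N q^x g(x) / [x]_q`.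
Pushing `T` through all of `qHstar q N k` and using `C(1, n) = q^n` turns it into
`∑_n q^n M_k(n)`, where `M_k = transferNest q N k` applies, index by index, `k_i - 1` times `S`
and then one division by `[·]_q`. Removing a head `1` from `k` removes a division and lowering a
head `a + 2` removes an `S`; on the Hoffman dual these are the moves `(t + 1) :: l ↦ t :: l` and
`1 :: l ↦ l`, so `q^n M_k(n)` is the outermost summand of `qzetaStar q N l`.
-/

open Finset

section QAnalogues

variable {q : ℝ}

lemma qint_zero : qint q 0 = 0 := by simp [qint]

lemma qint_add (a b : ℕ) : qint q (a + b) = qint q a + q ^ a * qint q b := by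
  simp only [qint, pow_add]; ring

lemma qint_pos (hq0 : 0 ≤ q) (hq1 : q < 1) {n : ℕ} (hn : n ≠ 0) : 0 < qint q n :=
  div_pos (sub_pos.2 (pow_lt_one₀ hq0 hq1 hn)) (sub_pos.2 hq1)

lemma qfact_zero : qfact q 0 = 1 := by simp [qfact]

lemma qfact_succ (n : ℕ) : qfact q (n + 1) = qfact q n * qint q (n + 1) :=
  prod_Icc_succ_top (by omega) _

lemma qfact_pos (hq0 : 0 ≤ q) (hq1 : q < 1) (n : ℕ) : 0 < qfact q n :=
  prod_pos fun _ ha => qint_pos hq0 hq1 (by grind)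

lemma qbinom_zero_right (hq0 : 0 ≤ q) (hq1 : q < 1) (n : ℕ) : qbinom q n 0 = 1 := by
  rw [qbinom, qfact_zero, one_mul, Nat.sub_zero, div_self (qfact_pos hq0 hq1 n).ne']

lemma qint_succ_mul_qbinom_succ_right (hq0 : 0 ≤ q) (hq1 : q < 1) (a b : ℕ) :
    qint q (a + 1) * qbinom q (a + b + 1) (a + 1) = qint q (b + 1) * qbinom q (a + b + 1) a := by
  rw [qbinom, qbinom, show a + b + 1 - (a + 1) = b by omega, show a + b + 1 - a = b + 1 by omega,
    qfact_succ a, qfact_succ b]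
  have := qfact_pos hq0 hq1 a
  have := qfact_pos hq0 hq1 b
  have := qint_pos hq0 hq1 a.succ_ne_zero
  have := qint_pos hq0 hq1 b.succ_ne_zero
  field_simp

lemma qint_succ_mul_qbinom_succ_left (hq0 : 0 ≤ q) (hq1 : q < 1) (a b : ℕ) :
    qint q (b + 1) * qbinom q (a + b + 1) a = qint q (a + b + 1) * qbinom q (a + b) a := by
  rw [qbinom, qbinom, show a + b + 1 - a = b + 1 by omega, Nat.add_sub_cancel_left, qfact_succ b,
    qfact_succ (a + b)]
  have := qfact_pos hq0 hq1 a
  have := qfact_pos hq0 hq1 b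
  have := qint_pos hq0 hq1 b.succ_ne_zero
  field_simp

end QAnalogues

section Connector

variable {q : ℝ}

noncomputable def connector (q : ℝ) (m n : ℕ) : ℝ :=
  if m ≤ n then (-1) ^ (m - 1) * q ^ (m.choose 2 + n) * qbinom q (n - 1) (m - 1) else 0

lemma connector_of_lt {m n : ℕ} (h : n < m) : connector q m n = 0 := if_neg (by omega)

lemma connector_succ_add_succ (a b : ℕ) :
    connector q (a + 1) (a + b + 1) =
      (-1) ^ a * q ^ ((a + 1).choose 2 + (a + b + 1)) * qbinom q (a + b) a := by
  rw [connector, if_pos (by omega), Nat.add_sub_cancel, Nat.add_sub_cancel]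

lemma connector_one_left (hq0 : 0 ≤ q) (hq1 : q < 1) {n : ℕ} (hn : 1 ≤ n) :
    connector q 1 n = q ^ n := by
  rw [connector, if_pos hn, qbinom_zero_right hq0 hq1]
  simp

lemma qint_mul_connector_succ_left (hq0 : 0 ≤ q) (hq1 : q < 1) {m : ℕ} (hm : 1 ≤ m)
    (n : ℕ) :
    qint q m * connector q (m + 1) n = -(q ^ m * qint q (n - m) * connector q m n) := by
  rcases le_or_gt n m with hnm | hmn
  · rw [connector_of_lt (by omega), Nat.sub_eq_zero_of_le hnm, qint_zero]
    ring
  obtain ⟨a, rfl⟩ : ∃ a, m = a + 1 := ⟨m - 1, by omega⟩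
  obtain ⟨b, rfl⟩ : ∃ b, n = a + 1 + b + 1 := ⟨n - a - 2, by omega⟩
  have hB := qint_succ_mul_qbinom_succ_right hq0 hq1 a b
  rw [show a + 1 + b + 1 - (a + 1) = b + 1 by omega, connector_succ_add_succ,
    show a + 1 + b + 1 = a + (b + 1) + 1 by ring, connector_succ_add_succ,
    Nat.choose_succ_succ' (a + 1), Nat.choose_one_right, show a + (b + 1) = a + b + 1 by ring,
    show a + 1 + b = a + b + 1 by ring]
  linear_combination (-1) ^ (a + 1) * q ^ ((a + 1).choose 2 + (a + 1) + (a + b + 1 + 1)) * hB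


lemma qint_mul_connector_sub_succ_left (hq0 : 0 ≤ q) (hq1 : q < 1) {m : ℕ} (hm : 1 ≤ m)
    (n : ℕ) :
    qint q m * (connector q m n - connector q (m + 1) n) = qint q n * connector q m n := by
  rcases le_or_gt m n with hmn | hnm
  · rw [mul_sub, qint_mul_connector_succ_left hq0 hq1 hm, ← Nat.add_sub_cancel' hmn, qint_add,
      Nat.add_sub_cancel_left]
    ring
  · rw [connector_of_lt hnm, connector_of_lt (by omega)]
    ring

lemma qint_mul_connector_succ_right (hq0 : 0 ≤ q) (hq1 : q < 1) {m : ℕ} (hm : 1 ≤ m)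
    (n : ℕ) :
    qint q (n + 1 - m) * connector q m (n + 1) = q * qint q n * connector q m n := by
  rcases le_or_gt m n with hmn | hnm
  · obtain ⟨a, rfl⟩ : ∃ a, m = a + 1 := ⟨m - 1, by omega⟩
    obtain ⟨b, rfl⟩ : ∃ b, n = a + b + 1 := ⟨n - a - 1, by omega⟩
    have hB := qint_succ_mul_qbinom_succ_left hq0 hq1 a b
    rw [show a + b + 1 + 1 - (a + 1) = b + 1 by omega, show a + b + 1 + 1 = a + (b + 1) + 1 by ring,
      connector_succ_add_succ, connector_succ_add_succ, ← add_assoc]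
    linear_combination (-1) ^ a * q ^ ((a + 1).choose 2 + (a + b + 1 + 1)) * hB
  · rcases (Nat.succ_le_of_lt hnm).eq_or_lt with rfl | hlt
    · rw [connector_of_lt hnm, Nat.sub_self, qint_zero]
      ring
    · rw [connector_of_lt hnm, connector_of_lt hlt]
      ring

noncomputable def qHstarLastFactor (q : ℝ) (N m : ℕ) : ℝ :=
  (-1) ^ (m - 1) * q ^ (m * (m + 1) / 2) * qbinom q N m

lemma pow_mul_qint_mul_qHstarLastFactor (hq0 : 0 ≤ q) (hq1 : q < 1) {N m : ℕ} (hm : 1 ≤ m)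
    (hmN : m ≤ N) :
    q ^ N * qint q m * qHstarLastFactor q N m = q ^ m * qint q N * connector q m N := by
  obtain ⟨a, rfl⟩ : ∃ a, m = a + 1 := ⟨m - 1, by omega⟩
  obtain ⟨b, rfl⟩ : ∃ b, N = a + b + 1 := ⟨N - a - 1, by omega⟩
  have hB1 := qint_succ_mul_qbinom_succ_right hq0 hq1 a b
  have hB2 := qint_succ_mul_qbinom_succ_left hq0 hq1 a b
  have htri : (a + 1) * (a + 1 + 1) / 2 = (a + 1).choose 2 + (a + 1) := by
    rw [Nat.choose_two_right, Nat.add_sub_cancel,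
      show (a + 1) * (a + 1 + 1) = (a + 1) * a + 2 * (a + 1) by ring,
      Nat.add_mul_div_left _ _ two_pos]
  rw [qHstarLastFactor, connector_succ_add_succ, Nat.add_sub_cancel, htri]
  linear_combination (-1) ^ a * q ^ (a + b + 1 + ((a + 1).choose 2 + (a + 1))) * (hB1 + hB2)


lemma sum_Icc_inv_qint_mul_connector (hq0 : 0 ≤ q) (hq1 : q < 1) {m n N : ℕ} (hm : 1 ≤ m)
    (hn : 1 ≤ n) (hnN : n ≤ N) :
    ∑ x ∈ Icc m N, (qint q x)⁻¹ * connector q x n = (qint q n)⁻¹ * connector q m n := by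
  rcases le_or_gt m N with hmN | hNm
  · have telescope : ∀ x ∈ Icc m N, (qint q x)⁻¹ * connector q x n =
        -((qint q n)⁻¹ * connector q (x + 1) n - (qint q n)⁻¹ * connector q x n) := by
      intro x hx
      have hx : 1 ≤ x := hm.trans (mem_Icc.1 hx).1
      have hE := qint_mul_connector_sub_succ_left hq0 hq1 hx n
      have := qint_pos hq0 hq1 (n := x) (by omega)
      have := qint_pos hq0 hq1 (n := n) (by omega)
      field_simp
      linear_combination -hE
    rw [sum_congr rfl telescope, sum_neg_distrib,
      sum_Icc_sub hmN fun x => (qint q n)⁻¹ * connector q x n, connector_of_lt (by omega)]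
    ring
  · rw [Icc_eq_empty (by omega), sum_empty, connector_of_lt (by omega), mul_zero]

lemma pow_mul_qint_mul_sum_connector (hq0 : 0 ≤ q) (hq1 : q < 1) {m : ℕ} (hm : 1 ≤ m)
    (n : ℕ) :
    q ^ n * qint q m * ∑ x ∈ Icc 1 n, connector q m x = q ^ m * qint q n * connector q m n := by
  induction n with
  | zero => simp [qint_zero]
  | succ n ih =>
    rw [sum_Icc_succ_top (by omega)]
    rcases le_or_gt m (n + 1) with hmn | hnm
    · have hstep := qint_mul_connector_succ_right hq0 hq1 hm n
      have hadd := qint_add (q := q) (n + 1 - m) m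
      have hpow : q ^ m * q ^ (n + 1 - m) = q ^ (n + 1) := by
        rw [← pow_add, Nat.add_sub_cancel' hmn]
      rw [Nat.sub_add_cancel hmn] at hadd
      linear_combination q * ih - q ^ m * hstep - q ^ m * connector q m (n + 1) * hadd -
        qint q m * connector q m (n + 1) * hpow
    · rw [connector_of_lt (by omega)] at ih
      rw [connector_of_lt hnm]
      linear_combination q * ih

lemma sum_connector_eq_qHstarLastFactor (hq0 : 0 < q) (hq1 : q < 1) {m N : ℕ} (hm : 1 ≤ m)
    (hmN : m ≤ N) :
    ∑ n ∈ Icc 1 N, connector q m n = qHstarLastFactor q N m := by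
  have hm₀ : qint q m ≠ 0 := (qint_pos hq0.le hq1 (by omega)).ne'
  refine mul_left_cancel₀ (mul_ne_zero (pow_ne_zero N hq0.ne') hm₀) ?_
  rw [pow_mul_qint_mul_sum_connector hq0.le hq1 hm,
    pow_mul_qint_mul_qHstarLastFactor hq0.le hq1 hm hmN]

end Connector

section Transfer

variable {q : ℝ} {N : ℕ}

noncomputable def tailSum (N : ℕ) (w h : ℕ → ℝ) (n : ℕ) : ℝ := ∑ x ∈ Icc n N, w x * h x

noncomputable def transfer (q : ℝ) (N : ℕ) (g : ℕ → ℝ) (m : ℕ) : ℝ :=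
  ∑ n ∈ Icc 1 N, connector q m n * g n

lemma tailSum_inv_qint_transfer (hq0 : 0 ≤ q) (hq1 : q < 1) (g : ℕ → ℝ) {m : ℕ}
    (hm : 1 ≤ m) :
    tailSum N (fun x => (qint q x)⁻¹) (transfer q N g) m =
      transfer q N (fun n => (qint q n)⁻¹ * g n) m := by
  simp only [tailSum, transfer, mul_sum]
  rw [sum_comm]
  refine sum_congr rfl fun n hn => ?_
  rw [mem_Icc] at hn
  rw [mul_left_comm, ← mul_assoc, ← sum_Icc_inv_qint_mul_connector hq0 hq1 hm hn.1 hn.2,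
    sum_mul]
  exact sum_congr rfl fun _ _ => by ring

lemma pow_div_qint_mul_transfer (hq0 : 0 ≤ q) (hq1 : q < 1) (g : ℕ → ℝ) {m : ℕ}
    (hm : 1 ≤ m) :
    q ^ m / qint q m * transfer q N g m =
      transfer q N (tailSum N (fun x => q ^ x / qint q x) g) m := by
  have hswap : ∀ F : ℕ → ℕ → ℝ,
      ∑ n ∈ Icc 1 N, ∑ x ∈ Icc n N, F n x = ∑ x ∈ Icc 1 N, ∑ n ∈ Icc 1 x, F n x :=
    fun F => sum_comm' fun n x => by simp only [mem_Icc]; omega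
  simp only [transfer, tailSum, mul_sum, hswap]
  refine sum_congr rfl fun x hx => ?_
  have hx : 1 ≤ x := (mem_Icc.1 hx).1
  have hsum := pow_mul_qint_mul_sum_connector hq0 hq1 hm x
  have := qint_pos hq0 hq1 (n := x) (by omega)
  have := qint_pos hq0 hq1 (n := m) (by omega)
  rw [← sum_mul]
  field_simp
  linear_combination -g x * hsum

lemma pow_div_qint_pow_mul_transfer (hq0 : 0 ≤ q) (hq1 : q < 1) (g : ℕ → ℝ) {m : ℕ}
    (hm : 1 ≤ m) (t : ℕ) :
    (q ^ m / qint q m) ^ t * transfer q N g m =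
      transfer q N ((tailSum N (fun x => q ^ x / qint q x))^[t] g) m := by
  induction t with
  | zero => simp
  | succ t ih =>
    rw [pow_succ', mul_assoc, ih, pow_div_qint_mul_transfer hq0 hq1 _ hm,
      Function.iterate_succ_apply']

end Transfer

section NestedSums

variable {q : ℝ} {N : ℕ}

noncomputable def nestedSum (N : ℕ) (u : ℕ → ℕ → ℝ) : List ℕ → (ℕ → ℝ) → ℕ → ℝ
  | [], f => f
  | j :: ks, f => tailSum N (u j) (nestedSum N u ks f)

lemma nestedSum_congr (u : ℕ → ℕ → ℝ) (k : List ℕ) {f f' : ℕ → ℝ} {m : ℕ}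
    (hf : ∀ x ∈ Icc m N, f x = f' x) (hmN : m ≤ N) :
    nestedSum N u k f m = nestedSum N u k f' m := by
  induction k generalizing m with
  | nil => exact hf m (mem_Icc.2 ⟨le_rfl, hmN⟩)
  | cons j ks ih =>
    simp only [nestedSum, tailSum]
    refine sum_congr rfl fun x hx => ?_
    rw [mem_Icc] at hx
    rw [ih (fun y hy => hf y (Icc_subset_Icc_left hx.1 hy)) hx.2]

noncomputable def qHstarWeight (q : ℝ) (j x : ℕ) : ℝ := q ^ ((j - 1) * x) / qint q x ^ j

noncomputable def qzetaStarWeight (q : ℝ) (j x : ℕ) : ℝ := q ^ x / qint q x ^ j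

lemma qHstarWeight_eq {j : ℕ} (hj : 1 ≤ j) (x : ℕ) :
    qHstarWeight q j x = (qint q x)⁻¹ * (q ^ x / qint q x) ^ (j - 1) := by
  obtain ⟨i, rfl⟩ : ∃ i, j = i + 1 := ⟨j - 1, by omega⟩
  rw [qHstarWeight, Nat.add_sub_cancel, mul_comm, pow_mul]
  ring

noncomputable def transferNest (q : ℝ) (N : ℕ) : List ℕ → (ℕ → ℝ) → ℕ → ℝ
  | [], g => g
  | j :: ks, g => fun n =>
      (qint q n)⁻¹ * (tailSum N (fun x => q ^ x / qint q x))^[j - 1] (transferNest q N ks g) n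

lemma nestedSum_qHstarWeight_transfer (hq0 : 0 ≤ q) (hq1 : q < 1) {k : List ℕ}
    (hk : ∀ j ∈ k, 0 < j) (g : ℕ → ℝ) {m : ℕ} (hm : 1 ≤ m) :
    nestedSum N (qHstarWeight q) k (transfer q N g) m = transfer q N (transferNest q N k g) m := by
  induction k generalizing m with
  | nil => rfl
  | cons j ks ih =>
    have hj : 1 ≤ j := hk j List.mem_cons_self
    have hterm : ∀ x ∈ Icc m N,
        qHstarWeight q j x * nestedSum N (qHstarWeight q) ks (transfer q N g) x =
          (qint q x)⁻¹ * transfer q N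
            ((tailSum N fun x => q ^ x / qint q x)^[j - 1] (transferNest q N ks g)) x := by
      intro x hx
      have hx : 1 ≤ x := hm.trans (mem_Icc.1 hx).1
      rw [ih (fun i hi => hk i (List.mem_cons_of_mem j hi)) hx, qHstarWeight_eq hj, mul_assoc,
        pow_div_qint_pow_mul_transfer hq0 hq1 _ hx]
    exact (sum_congr rfl hterm).trans (tailSum_inv_qint_transfer hq0 hq1 _ hm)

lemma transfer_one_left (hq0 : 0 ≤ q) (hq1 : q < 1) (g : ℕ → ℝ) :
    transfer q N g 1 = tailSum N (fun n => q ^ n) g 1 :=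
  sum_congr rfl fun n hn => by rw [connector_one_left hq0 hq1 (mem_Icc.1 hn).1]

end NestedSums

section Chains

variable {N : ℕ}

def chainsFrom (N a r : ℕ) : Finset (Fin r → ℕ) :=
  (Fintype.piFinset fun _ => Icc a N).filter fun m => ∀ i j : Fin r, i ≤ j → m i ≤ m j

lemma chainsFrom_zero (a : ℕ) : chainsFrom N a 0 = {Fin.elim0} :=
  eq_singleton_iff_unique_mem.2
    ⟨mem_filter.2 ⟨Fintype.mem_piFinset.2 fun i => i.elim0, fun i => i.elim0⟩,
      fun _ _ => Subsingleton.elim _ _⟩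

lemma cons_mem_chainsFrom {a r x : ℕ} {mt : Fin r → ℕ} :
    Fin.cons x mt ∈ chainsFrom N a (r + 1) ↔ x ∈ Icc a N ∧ mt ∈ chainsFrom N x r := by
  simp only [chainsFrom, mem_filter, Fintype.mem_piFinset, Fin.forall_fin_succ, Fin.cons_zero,
    Fin.cons_succ, mem_Icc, Fin.succ_le_succ_iff, Fin.zero_le, Fin.le_zero_iff, Fin.succ_ne_zero]
  grind

lemma sum_chainsFrom_succ {a r : ℕ} (F : (Fin (r + 1) → ℕ) → ℝ) :
    ∑ m ∈ chainsFrom N a (r + 1), F m =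
      ∑ x ∈ Icc a N, ∑ mt ∈ chainsFrom N x r, F (Fin.cons x mt) := by
  rw [sum_sigma']
  refine sum_nbij' (fun m => ⟨m 0, Fin.tail m⟩) (fun p => Fin.cons p.1 p.2) ?_ ?_ ?_ ?_ ?_
  · intro m hm
    rw [← Fin.cons_self_tail m, cons_mem_chainsFrom] at hm
    simpa using hm
  · intro p hp
    simpa [cons_mem_chainsFrom] using hp
  · intro m _
    exact Fin.cons_self_tail m
  · intro p _
    simp
  · intro m _
    simp

lemma sum_chainsFrom_prod_mul (u : ℕ → ℕ → ℝ) (f : ℕ → ℝ) (j : ℕ) (ks : List ℕ) (a : ℕ) :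
    ∑ m ∈ chainsFrom N a (ks.length + 1),
        (∏ i, u ((j :: ks).get i) (m i)) * f (m (Fin.last ks.length)) =
      nestedSum N u (j :: ks) f a := by
  induction ks generalizing j a with
  | nil =>
    simp [sum_chainsFrom_succ, chainsFrom_zero, nestedSum, tailSum]
  | cons c ks ih =>
    rw [sum_chainsFrom_succ, nestedSum.eq_2 (j := j), tailSum]
    refine sum_congr rfl fun x _ => ?_
    rw [← ih, mul_sum]
    refine sum_congr rfl fun mt _ => ?_
    simp only [List.length_cons] at mt ⊢
    rw [Fin.prod_univ_succ, ← Fin.succ_last]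
    have hget : ∀ i, (j :: c :: ks).get i.succ = (c :: ks).get i := fun _ => rfl
    simp only [Fin.cons_zero, Fin.cons_succ, List.get_cons_zero, hget]
    ring

end Chains

lemma qHstar_cons (q : ℝ) (N j : ℕ) (ks : List ℕ) :
    qHstar q N (j :: ks) = nestedSum N (qHstarWeight q) (j :: ks) (qHstarLastFactor q N) 1 := by
  rw [qHstar, dif_pos (List.length_pos_iff.2 (List.cons_ne_nil j ks))]
  exact sum_chainsFrom_prod_mul (N := N) (qHstarWeight q) (qHstarLastFactor q N) j ks 1

lemma qzetaStar_cons (q : ℝ) (N c : ℕ) (lt : List ℕ) :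
    qzetaStar q N (c :: lt) = nestedSum N (qzetaStarWeight q) (c :: lt) (fun _ => 1) 1 := by
  rw [← sum_chainsFrom_prod_mul]
  exact sum_congr rfl fun m _ => (mul_one _).symm

section HoffmanDual

lemma psums_singleton (a : ℕ) : psums [a] = ∅ := by simp [psums]

lemma psums_cons (a : ℕ) {ks : List ℕ} (hks : ks ≠ []) :
    psums (a :: ks) = insert a ((psums ks).image (· + a)) := by
  have hlen : 1 ≤ ks.length := List.length_pos_iff.2 hks
  ext x
  simp only [psums, List.mem_toFinset, List.mem_map, List.mem_range, mem_insert, mem_image,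
    List.length_cons]
  constructor
  · rintro ⟨_ | j, hj, rfl⟩
    · simp
    · refine Or.inr ⟨_, ⟨j, by omega, rfl⟩, ?_⟩
      rw [List.take_succ_cons, List.sum_cons, add_comm]
  · rintro (rfl | ⟨_, ⟨j, hj, rfl⟩, rfl⟩)
    · exact ⟨0, by omega, by simp⟩
    · exact ⟨j + 1, by omega, by rw [List.take_succ_cons, List.sum_cons, add_comm]⟩

lemma psums_succ_cons (a : ℕ) (ks : List ℕ) :
    psums ((a + 1) :: ks) = (psums (a :: ks)).image (· + 1) := by
  rcases eq_or_ne ks [] with rfl | hks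
  · simp [psums_singleton]
  · rw [psums_cons _ hks, psums_cons _ hks, image_insert, image_image]
    rfl

lemma le_of_mem_psums_cons {a p : ℕ} {ks : List ℕ} (hp : p ∈ psums (a :: ks)) : a ≤ p := by
  rcases eq_or_ne ks [] with rfl | hks
  · simp [psums_singleton] at hp
  · rw [psums_cons _ hks, mem_insert, mem_image] at hp
    rcases hp with rfl | ⟨r, _, rfl⟩ <;> omega

lemma psums_subset_Icc {k : List ℕ} (hk : ∀ x ∈ k, 0 < x) : psums k ⊆ Icc 1 (k.sum - 1) := by
  induction k with
  | nil => simp [psums]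
  | cons a ks ih =>
    rcases eq_or_ne ks [] with rfl | hks
    · simp [psums_singleton]
    have ha := hk a List.mem_cons_self
    have hs := List.sum_pos ks (fun x hx => hk x (List.mem_cons_of_mem a hx)) hks
    have ih := ih fun x hx => hk x (List.mem_cons_of_mem a hx)
    intro p hp
    rw [psums_cons _ hks, mem_insert, mem_image] at hp
    rw [List.sum_cons, mem_Icc]
    rcases hp with rfl | ⟨r, hr, rfl⟩
    · omega
    · have := mem_Icc.1 (ih hr)
      omega

lemma IsHoffmanDual.symm {k l : List ℕ} (h : IsHoffmanDual k l) : IsHoffmanDual l k := by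
  obtain ⟨hk, hl, hkp, hlp, hsum, hps⟩ := h
  refine ⟨hl, hk, hlp, hkp, hsum.symm, ?_⟩
  rw [← hsum, hps, Finset.sdiff_sdiff_eq_self (psums_subset_Icc hkp)]

lemma isHoffmanDual_singleton_one {l : List ℕ} (h : IsHoffmanDual [1] l) : l = [1] := by
  obtain ⟨-, hl, -, hlp, hsum, -⟩ := h
  obtain ⟨b, lt, rfl⟩ := List.exists_cons_of_ne_nil hl
  have hb := hlp b List.mem_cons_self
  rcases eq_or_ne lt [] with rfl | hlt
  · simp_all
  · have := List.sum_pos lt (fun x hx => hlp x (List.mem_cons_of_mem b hx)) hlt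
    simp only [List.sum_cons, List.sum_nil] at hsum
    omega

lemma Icc_sdiff_psums_one_cons {ks : List ℕ} (hks : ks ≠ []) :
    Icc 1 ((1 :: ks).sum - 1) \ psums (1 :: ks) =
      (Icc 1 (ks.sum - 1) \ psums ks).image (· + 1) := by
  rw [psums_cons 1 hks, List.sum_cons]
  ext x
  simp only [mem_sdiff, mem_Icc, mem_insert, mem_image]
  constructor
  · rintro ⟨hx, hx'⟩
    exact ⟨x - 1, ⟨by omega, fun hx₁ => hx' (Or.inr ⟨x - 1, hx₁, by omega⟩)⟩, by omega⟩
  · rintro ⟨p, ⟨hp, hp'⟩, rfl⟩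
    refine ⟨by omega, ?_⟩
    rintro (h1 | ⟨r, hr, hrp⟩)
    · omega
    · obtain rfl := Nat.add_right_cancel hrp
      exact hp' hr

lemma IsHoffmanDual.of_one_cons {ks l : List ℕ} (h : IsHoffmanDual (1 :: ks) l)
    (hks : ks ≠ []) :
    ∃ t lt, l = (t + 1) :: lt ∧ IsHoffmanDual ks (t :: lt) := by
  obtain ⟨-, hl, hkp, hlp, hsum, hps⟩ := h
  rw [Icc_sdiff_psums_one_cons hks] at hps
  have hksp : ∀ x ∈ ks, 0 < x := fun x hx => hkp x (List.mem_cons_of_mem 1 hx)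
  have hs := List.sum_pos ks hksp hks
  obtain ⟨b, lt, rfl⟩ := List.exists_cons_of_ne_nil hl
  obtain ⟨t, rfl, ht⟩ : ∃ t, b = t + 1 ∧ 1 ≤ t := by
    rcases eq_or_ne lt [] with rfl | hlt
    · simp only [List.sum_cons, List.sum_nil] at hsum
      exact ⟨b - 1, by omega, by omega⟩
    · have hb : b ∈ psums (b :: lt) := by simp [psums_cons b hlt]
      rw [hps, mem_image] at hb
      obtain ⟨p, hp, rfl⟩ := hb
      exact ⟨p, rfl, (mem_Icc.1 (mem_sdiff.1 hp).1).1⟩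
  refine ⟨t, lt, rfl, hks, List.cons_ne_nil t lt, hksp, ?_, ?_, ?_⟩
  · intro x hx
    rcases List.mem_cons.1 hx with rfl | hx
    · exact ht
    · exact hlp x (List.mem_cons_of_mem _ hx)
  · simp only [List.sum_cons] at hsum ⊢
    omega
  · rw [psums_succ_cons] at hps
    exact image_injective (add_left_injective 1) hps

lemma IsHoffmanDual.of_succ_succ_cons {a : ℕ} {ks l : List ℕ}
    (h : IsHoffmanDual ((a + 2) :: ks) l) :
    ∃ lt, l = 1 :: lt ∧ IsHoffmanDual ((a + 1) :: ks) lt := by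
  have hsymm := h.symm
  obtain ⟨-, hl, -, hlp, -, hps⟩ := h
  have hone : 1 ∈ psums l := by
    rw [hps, mem_sdiff, mem_Icc, List.sum_cons]
    exact ⟨⟨le_rfl, by omega⟩, fun hmem => by have := le_of_mem_psums_cons hmem; omega⟩
  obtain ⟨b, lt, rfl⟩ := List.exists_cons_of_ne_nil hl
  have hlt : lt ≠ [] := by
    rintro rfl
    simp [psums_singleton] at hone
  have hb : b = 1 := by
    rw [psums_cons b hlt, mem_insert, mem_image] at hone
    rcases hone with h1 | ⟨p, hp, hpb⟩
    · exact h1.symm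
    · have := mem_Icc.1 (psums_subset_Icc (fun x hx => hlp x (List.mem_cons_of_mem b hx)) hp)
      have := hlp b List.mem_cons_self
      omega
  subst hb
  obtain ⟨t, kt, hk, h'⟩ := hsymm.of_one_cons hlt
  obtain ⟨ht, rfl⟩ := List.cons.inj hk
  obtain rfl : t = a + 1 := by omega
  exact ⟨lt, rfl, h'.symm⟩

end HoffmanDual

lemma pow_mul_transferNest_one {q : ℝ} {N : ℕ} {k : List ℕ} {c : ℕ} {lt : List ℕ}
    (h : IsHoffmanDual k (c :: lt)) (n : ℕ) :
    q ^ n * transferNest q N k (fun _ => 1) n =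
      qzetaStarWeight q c n * nestedSum N (qzetaStarWeight q) lt (fun _ => 1) n := by
  induction k generalizing c lt n with
  | nil => exact absurd rfl h.1
  | cons j ks ih =>
    induction j generalizing c lt n with
    | zero => exact absurd (h.2.2.1 0 List.mem_cons_self) (lt_irrefl 0)
    | succ a iha =>
      rcases a with _ | a
      · rcases eq_or_ne ks [] with rfl | hks
        · obtain ⟨rfl, rfl⟩ := List.cons.inj (isHoffmanDual_singleton_one h)
          simp [transferNest, nestedSum, qzetaStarWeight, div_eq_mul_inv]
        · obtain ⟨t, lt', hl, h'⟩ := h.of_one_cons hks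
          obtain ⟨rfl, rfl⟩ := List.cons.inj hl
          have hih := ih h' n
          simp only [transferNest, Nat.add_sub_cancel, Function.iterate_zero, id] at hih ⊢
          rw [mul_left_comm, hih, qzetaStarWeight, qzetaStarWeight, pow_succ]
          ring
      · obtain ⟨lt', hl, h'⟩ := h.of_succ_succ_cons
        obtain ⟨rfl, rfl⟩ := List.cons.inj hl
        obtain ⟨d, dt, rfl⟩ := List.exists_cons_of_ne_nil h'.2.1
        have hstep : ∀ x, q ^ x * transferNest q N ((a + 1) :: ks) (fun _ => 1) x =
            qzetaStarWeight q d x * nestedSum N (qzetaStarWeight q) dt (fun _ => 1) x :=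
          iha h'
        simp only [transferNest, Nat.add_sub_cancel] at hstep ⊢
        rw [Function.iterate_succ_apply', nestedSum, tailSum, tailSum, qzetaStarWeight, pow_one,
          ← sum_congr rfl fun x _ => hstep x]
        simp only [div_eq_mul_inv, mul_assoc]

theorem bradley_q_duality (q : ℝ) (hq0 : 0 < q) (hq1 : q < 1) (N : ℕ) (hN : 0 < N)
    (k l : List ℕ) (h : IsHoffmanDual k l) :
    qHstar q N k = qzetaStar q N l := by
  obtain ⟨j, ks, rfl⟩ := List.exists_cons_of_ne_nil h.1
  obtain ⟨c, lt, rfl⟩ := List.exists_cons_of_ne_nil h.2.1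
  have hlast : ∀ x ∈ Icc 1 N, qHstarLastFactor q N x = transfer q N (fun _ => 1) x :=
    fun x hx => by
      simp only [transfer, mul_one]
      exact (sum_connector_eq_qHstarLastFactor hq0 hq1 (mem_Icc.1 hx).1 (mem_Icc.1 hx).2).symm
  rw [qHstar_cons, qzetaStar_cons, nestedSum_congr _ _ hlast hN,
    nestedSum_qHstarWeight_transfer hq0.le hq1 h.2.2.1 _ le_rfl, transfer_one_left hq0.le hq1]
  exact sum_congr rfl fun n _ => pow_mul_transferNest_one h n
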